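/- arXiv:2411.05721 — 3 statements merged into one kernel-verified Lean document; each statement's English description precedes it below -/
import Mathlib

section
/- Let n and d be positive integers. For every u ∈ ℤ^d_{≥0}, the kernel of the restriction of π to the multidegree-u component S_u equals (I_R)_u, the multidegree-u component of the ideal I_R. -/
/-!
Common setup, following the paper "On the abundance of minimal border rank symmetric
tensors verifying Comon's conjecture".

* `S = ℂ[α_{i,j} : 1 ≤ i ≤ d, 1 ≤ j ≤ n]` is modeled as `MvPolynomial (Fin d × Fin n) ℂ`,
  with the `ℤ^d`-grading in which `deg α_{i,j} = e_i`; `Scomp n d u` is the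
  multidegree-`u` component (`u : Fin d → ℕ`).
* `V = ℂ[β_1,…,β_n]` is modeled as `MvPolynomial (Fin n) ℂ` with its standard grading;
  `Vcomp n N` is the degree-`N` component.
* The graded duals `T` and `P` are modeled by the same polynomial rings, with `S`
  (resp. `V`) acting by differentiation (`apolar`); `ann F` is the apolar
  (annihilator) ideal of `F`.
* A tensor `F ∈ (ℂ^n)^{⊗d}` is an element of the multidegree-`(1,…,1)` component
  `Scomp n d (fun _ => 1)` (a multilinear form in the `x_{i,j}`).
-/

open MvPolynomial Submodule Module

noncomputable section

namespace BorderComon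

/-- the multidegree-`u` graded component of `S`. -/
def Scomp (n d : ℕ) (u : Fin d → ℕ) : Submodule ℂ (MvPolynomial (Fin d × Fin n) ℂ) :=
  weightedHomogeneousSubmodule ℂ (fun p : Fin d × Fin n => Pi.single p.1 1) u

/-- the degree-`N` graded component of `V`. -/
def Vcomp (n : ℕ) (N : ℕ) : Submodule ℂ (MvPolynomial (Fin n) ℂ) :=
  homogeneousSubmodule (Fin n) ℂ N

/-- the diagonal ring map `π : S → V`, `α_{i,j} ↦ β_j`. -/
def piAlg (n d : ℕ) : MvPolynomial (Fin d × Fin n) ℂ →ₐ[ℂ] MvPolynomial (Fin n) ℂ :=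
  aeval (fun p : Fin d × Fin n => X p.2)

/-- `π` as a `ℂ`-linear map. -/
def piL (n d : ℕ) : MvPolynomial (Fin d × Fin n) ℂ →ₗ[ℂ] MvPolynomial (Fin n) ℂ :=
  (piAlg n d).toLinearMap

/-- the ring map `ρ : S → V`, `α_{1,j} ↦ β_j` and `α_{i,j} ↦ 0` for `i ≥ 2`
(rows are `0`-indexed, so the first row is row `0`). -/
def rho (n d : ℕ) : MvPolynomial (Fin d × Fin n) ℂ →ₐ[ℂ] MvPolynomial (Fin n) ℂ :=
  aeval (fun p : Fin d × Fin n => if (p.1 : ℕ) = 0 then X p.2 else 0)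

/-- the result of differentiating `F` by the monomial `X^a`:
`∂^a X^b = (∏_i b_i!/(b_i-a_i)!) X^{b-a}` (and `= 0` unless `a ≤ b`, which is
automatic since the descending factorial vanishes there). -/
def diffMon {σ : Type*} (a : σ →₀ ℕ) (F : MvPolynomial σ ℂ) : MvPolynomial σ ℂ :=
  ∑ b ∈ F.support, (F.coeff b * ∏ i ∈ a.support, ((b i).descFactorial (a i) : ℂ)) •
    monomial (b - a) (1 : ℂ)

/-- the apolarity action: `apolar F ψ = ψ ∘ F` is the result of letting `ψ` act on `F`
by differentiation, linearly in `ψ`. -/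
def apolar {σ : Type*} (F : MvPolynomial σ ℂ) : MvPolynomial σ ℂ →ₗ[ℂ] MvPolynomial σ ℂ :=
  Finsupp.lsum ℂ (fun a : σ →₀ ℕ => LinearMap.toSpanSingleton ℂ _ (diffMon a F)) ∘ₗ
    (AddMonoidAlgebra.coeffLinearEquiv ℂ).toLinearMap

/-- the apolar (annihilator) ideal `Ann(F) = {ψ : ψ ∘ F = 0}`, as a subspace. -/
def ann {σ : Type*} (F : MvPolynomial σ ℂ) : Submodule ℂ (MvPolynomial σ ℂ) :=
  LinearMap.ker (apolar F)

/-- the ideal `I_R ⊆ S` generated by the `2×2` minors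
`α_{i,j} α_{k,ℓ} − α_{i,ℓ} α_{k,j}`, `i < k`, `j < ℓ`. -/
def IR (n d : ℕ) : Ideal (MvPolynomial (Fin d × Fin n) ℂ) :=
  Ideal.span {q | ∃ i k : Fin d, ∃ j l : Fin n, i < k ∧ j < l ∧
    q = X (i, j) * X (k, l) - X (i, l) * X (k, j)}

/-- `J ⊆ S` is a (multigraded) homogeneous ideal: it is the sum of its
multigraded components. -/
def IsHomogS (n d : ℕ) (J : Ideal (MvPolynomial (Fin d × Fin n) ℂ)) : Prop :=
  Submodule.restrictScalars ℂ J = ⨆ u : Fin d → ℕ, (Submodule.restrictScalars ℂ J ⊓ Scomp n d u)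

/-- `I ⊆ V` is a homogeneous ideal: it is the sum of its graded components. -/
def IsHomogV (n : ℕ) (I : Ideal (MvPolynomial (Fin n) ℂ)) : Prop :=
  Submodule.restrictScalars ℂ I = ⨆ N : ℕ, (Submodule.restrictScalars ℂ I ⊓ Vcomp n N)

/-- the exponent redistribution underlying `ψ_u`: in the sorted list
`i_1 ≤ ⋯ ≤ i_N` of the indices of the monomial `β^γ` (value `j` occurring `γ j`
times, `N = |γ|`), row `i` receives the block of positions
`[∑_{i'<i} u i', ∑_{i'≤i} u i')`, while value `j` occupies positions
`[∑_{j'<j} γ j', ∑_{j'≤j} γ j')`; hence the exponent of `α_{i,j}` is the size of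
the intersection of these two intervals. -/
def distrib (n d : ℕ) (u : Fin d → ℕ) (γ : Fin n →₀ ℕ) : (Fin d × Fin n) →₀ ℕ :=
  Finsupp.equivFunOnFinite.symm fun p : Fin d × Fin n =>
    min (∑ i ∈ Finset.univ.filter fun i : Fin d => (i : ℕ) ≤ (p.1 : ℕ), u i)
        (∑ j ∈ Finset.univ.filter fun j : Fin n => (j : ℕ) ≤ (p.2 : ℕ), γ j)
    - max (∑ i ∈ Finset.univ.filter fun i : Fin d => (i : ℕ) < (p.1 : ℕ), u i)
          (∑ j ∈ Finset.univ.filter fun j : Fin n => (j : ℕ) < (p.2 : ℕ), γ j)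

/-- the linear map `ψ_u : V → S` sending a monomial `β_{i_1} β_{i_2} ⋯ β_{i_N}`
with `i_1 ≤ i_2 ≤ ⋯ ≤ i_N` to
`(α_{1,i_1} ⋯ α_{1,i_{u_1}}) (α_{2,i_{u_1+1}} ⋯ α_{2,i_{u_1+u_2}}) ⋯`.
(Its restriction to `Vcomp n (∑ i, u i)` is the map `ψ_u : V_{|u|} → S_u` of the
paper.) -/
def psi (n d : ℕ) (u : Fin d → ℕ) :
    MvPolynomial (Fin n) ℂ →ₗ[ℂ] MvPolynomial (Fin d × Fin n) ℂ :=
  AddMonoidAlgebra.mapDomainLinearMap ℂ ℂ (distrib n d u)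

/-- `Υ(I) = I_R + ∑_{u} ψ_u(I_{|u|}) ⊆ S`. -/
def Upsilon (n d : ℕ) (I : Ideal (MvPolynomial (Fin n) ℂ)) :
    Submodule ℂ (MvPolynomial (Fin d × Fin n) ℂ) :=
  restrictScalars ℂ (IR n d) ⊔
    ⨆ u : Fin d → ℕ, Submodule.map (psi n d u) (restrictScalars ℂ I ⊓ Vcomp n (∑ i, u i))

/-- the irrelevant ideal `B_X = ∏_{i=1}^d (α_{i,1},…,α_{i,n}) ⊆ S`. -/
def BX (n d : ℕ) : Ideal (MvPolynomial (Fin d × Fin n) ℂ) :=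
  ∏ i : Fin d, Ideal.span (Set.range fun j : Fin n => X (i, j))

/-- the irrelevant ideal `B_Y = (β_1,…,β_n) ⊆ V`. -/
def BY (n : ℕ) : Ideal (MvPolynomial (Fin n) ℂ) :=
  Ideal.span (Set.range X)

/-- `Σ(J) = ⊕_{a ≥ 0} ⊕_{s ∈ ℰ} π(J_{a𝟏+s}) ⊆ V`, where
`ℰ = {0, e_1, e_1+e_2, …, e_1+⋯+e_{d-1}}` (the element `s` with `m` ones is
`fun i => if i < m then 1 else 0`). -/
def SigmaMap (n d : ℕ) (J : Ideal (MvPolynomial (Fin d × Fin n) ℂ)) :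
    Submodule ℂ (MvPolynomial (Fin n) ℂ) :=
  ⨆ a : ℕ, ⨆ m : Fin d, Submodule.map (piL n d)
    (restrictScalars ℂ J ⊓ Scomp n d (fun i => a + if (i : ℕ) < (m : ℕ) then 1 else 0))

/-- the set of tensors of rank at most `r`: sums of `r` decomposable tensors
`v_1 ⊗ ⋯ ⊗ v_d = ∏_i (∑_j v_i(j) x_{i,j})`. -/
def rankLE (n d r : ℕ) : Set (MvPolynomial (Fin d × Fin n) ℂ) :=
  {F | ∃ v : Fin r → Fin d → Fin n → ℂ,
    F = ∑ s : Fin r, ∏ i : Fin d, ∑ j : Fin n, C (v s i j) * X (i, j)}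

/-- `F` has border rank at most `r`: coefficientwise (finitely many coefficients are
involved), `F` lies in the closure of the set of tensors of rank at most `r`. -/
def brkLE (n d : ℕ) (F : MvPolynomial (Fin d × Fin n) ℂ) (r : ℕ) : Prop :=
  (fun m => coeff m F) ∈ closure ((fun G => fun m => coeff m G) '' rankLE n d r)

/-- the border rank of a tensor. -/
def brk (n d : ℕ) (F : MvPolynomial (Fin d × Fin n) ℂ) : ℕ :=
  sInf {r | brkLE n d F r}

/-- polynomials that are sums of `r` `d`-th powers of linear forms. -/
def srankLE (n d r : ℕ) : Set (MvPolynomial (Fin n) ℂ) :=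
  {p | ∃ c : Fin r → Fin n → ℂ, p = ∑ s : Fin r, (∑ j : Fin n, C (c s j) * X j) ^ d}

/-- `p` has symmetric border rank at most `r`. -/
def sbrkLE (n d : ℕ) (p : MvPolynomial (Fin n) ℂ) (r : ℕ) : Prop :=
  (fun m => coeff m p) ∈ closure ((fun q => fun m => coeff m q) '' srankLE n d r)

/-- the symmetric border rank of a degree-`d` form. -/
def sbrk (n d : ℕ) (p : MvPolynomial (Fin n) ℂ) : ℕ :=
  sInf {r | sbrkLE n d p r}

/-- `F` is a symmetric tensor: invariant under the permutations of the `d` factors. -/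
def IsSymm (n d : ℕ) (F : MvPolynomial (Fin d × Fin n) ℂ) : Prop :=
  ∀ τ : Equiv.Perm (Fin d), rename (Prod.map τ id) F = F

/-- the degree-`d` polynomial `p_F` corresponding to a symmetric tensor `F`, obtained
by identifying all the rows of variables (`x_{i,j} ↦ y_j`); `F` is the polarization
of `p_F`. -/
def pF (n d : ℕ) (F : MvPolynomial (Fin d × Fin n) ℂ) : MvPolynomial (Fin n) ℂ :=
  rename Prod.snd F

/-- `F` is concise: the contraction `(ℂ^n)^* → (ℂ^n)^{⊗(d-1)}` of the first tensor
factor, `w ↦ F(x_{1,j} := w_j)`, is injective. -/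
def Concise (n d : ℕ) (F : MvPolynomial (Fin d × Fin n) ℂ) : Prop :=
  Function.Injective fun w : Fin n → ℂ =>
    aeval (fun p : Fin d × Fin n => if (p.1 : ℕ) = 0 then C (w p.2) else X p) F

/-- the ideal `∑_{0<u<𝟏} S·Ann(F)_u` generated by the components `Ann(F)_u`,
`0 < u < 𝟏` (componentwise). -/
def midIdeal (n d : ℕ) (F : MvPolynomial (Fin d × Fin n) ℂ) :
    Ideal (MvPolynomial (Fin d × Fin n) ℂ) :=
  Ideal.span (⋃ u ∈ {u : Fin d → ℕ | 0 < u ∧ u < fun _ => 1},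
    ((ann F ⊓ Scomp n d u : Submodule ℂ (MvPolynomial (Fin d × Fin n) ℂ)) :
      Set (MvPolynomial (Fin d × Fin n) ℂ)))

/-- `F` is a *sharp* tensor:
(1) `Ann(F)` has exactly `n-1` minimal generators of multidegree `𝟏`;
(2) `dim (S/Ann F)_u = n` for all `0 < u < 𝟏`;
(3) `dim (S/(Ann(F)_{e_i+e_j}))_{s e_i + e_j} = n` for all `i ≠ j`, `1 ≤ s ≤ d-1`. -/
def Sharp (n d : ℕ) (F : MvPolynomial (Fin d × Fin n) ℂ) : Prop :=
  (finrank ℂ (ann F ⊓ Scomp n d fun _ => 1 :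
        Submodule ℂ (MvPolynomial (Fin d × Fin n) ℂ)) -
      finrank ℂ (restrictScalars ℂ (midIdeal n d F) ⊓ Scomp n d fun _ => 1 :
        Submodule ℂ (MvPolynomial (Fin d × Fin n) ℂ)) = n - 1) ∧
  (∀ u : Fin d → ℕ, 0 < u → u < (fun _ => 1) →
    finrank ℂ (Scomp n d u ⧸ Submodule.comap (Scomp n d u).subtype (ann F)) = n) ∧
  (∀ i j : Fin d, i ≠ j → ∀ s : ℕ, 1 ≤ s → s ≤ d - 1 →
    finrank ℂ (Scomp n d (Pi.single i s + Pi.single j 1) ⧸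
      Submodule.comap (Scomp n d (Pi.single i s + Pi.single j 1)).subtype
        (restrictScalars ℂ (Ideal.span
          ((ann F ⊓ Scomp n d (Pi.single i 1 + Pi.single j 1) :
            Submodule ℂ (MvPolynomial (Fin d × Fin n) ℂ)) :
            Set (MvPolynomial (Fin d × Fin n) ℂ))))) = n)

end BorderComon

/-!
Modulo the `2 × 2` minors, two monomials with the same row margins and the same column margins
are congruent: if `α_{i,j}` divides the first, one exchange `α_{i,l} α_{k,j} ↦ α_{i,j} α_{k,l}`
(a monomial multiple of a minor) makes it divide the second too, and one cancels it and
inducts. Now `π` sends a monomial to the monomial of its column margin, and all monomials of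
an element `x ∈ S_u` have row margin `u`. Lifting each monomial of `V` to a monomial of `x`
above it gives a linear map `L` with `x ≡ L (π x)` modulo the minors, so `π x = 0` forces
`x ∈ I_R`.
-/

namespace Finsupp

variable {α β : Type*}

lemma exists_eq_add_single_of_pos {m : α →₀ ℕ} {a : α} (h : 0 < m a) :
    ∃ m₀, m = m₀ + single a 1 :=
  ⟨m - single a 1, (tsub_add_cancel_of_le (single_le_iff.2 h)).symm⟩

lemma mapDomain_pos_iff {f : α → β} {m : α →₀ ℕ} {b : β} :
    0 < m.mapDomain f b ↔ ∃ a, f a = b ∧ 0 < m a := by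
  classical
  simp only [pos_iff_ne_zero, ← mem_support_iff, mapDomain_support_of_subsingletonAddUnits,
    Finset.mem_image]
  exact ⟨fun ⟨a, ha, hfa⟩ => ⟨a, hfa, ha⟩, fun ⟨a, hfa, ha⟩ => ⟨a, ha, hfa⟩⟩

lemma weight_pi_single_fst [DecidableEq α] (m : α × β →₀ ℕ) :
    weight (fun p : α × β => Pi.single p.1 (1 : ℕ)) m = ⇑(m.mapDomain Prod.fst) := by
  induction m using induction_linear with
  | zero => simp
  | add f g hf hg => simp [mapDomain_add, hf, hg]
  | single p k => simp [weight_single, single_eq_pi_single, ← Pi.single_smul']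

end Finsupp

namespace MvPolynomial

variable (R : Type*) [CommRing R] (ι κ : Type*)

def minorsIdeal : Ideal (MvPolynomial (ι × κ) R) :=
  Ideal.span {q | ∃ i k j l, q = X (i, j) * X (k, l) - X (i, l) * X (k, j)}

variable {R ι κ}

lemma minor_mem_minorsIdeal (i k : ι) (j l : κ) :
    (X (i, j) * X (k, l) - X (i, l) * X (k, j) : MvPolynomial (ι × κ) R) ∈ minorsIdeal R ι κ :=
  Ideal.subset_span ⟨i, k, j, l, rfl⟩

lemma minorsIdeal_le_ker_rename_snd :
    minorsIdeal R ι κ ≤ RingHom.ker (rename (R := R) (Prod.snd : ι × κ → κ)) := by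
  rw [minorsIdeal, Ideal.span_le]
  rintro _ ⟨i, k, j, l, rfl⟩
  simp [mul_comm]

lemma exists_exchange_mem_minorsIdeal {m : ι × κ →₀ ℕ} {i : ι} {j : κ}
    (hi : 0 < m.mapDomain Prod.fst i) (hj : 0 < m.mapDomain Prod.snd j) :
    ∃ m' : ι × κ →₀ ℕ, m'.mapDomain Prod.fst = m.mapDomain Prod.fst ∧
      m'.mapDomain Prod.snd = m.mapDomain Prod.snd ∧ 0 < m' (i, j) ∧
      monomial m (1 : R) - monomial m' 1 ∈ minorsIdeal R ι κ := by
  by_cases hij : 0 < m (i, j)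
  · exact ⟨m, rfl, rfl, hij, by simp⟩
  obtain ⟨⟨i', l⟩, hi' : i' = i, hil⟩ := Finsupp.mapDomain_pos_iff.1 hi
  obtain ⟨⟨k, j'⟩, hj' : j' = j, hkj⟩ := Finsupp.mapDomain_pos_iff.1 hj
  subst i' j'
  obtain ⟨m₁, rfl⟩ := Finsupp.exists_eq_add_single_of_pos hil
  have hne : ((k, j) : ι × κ) ≠ (i, l) := by
    rintro ⟨⟩
    simp_all
  obtain ⟨m₀, rfl⟩ : ∃ m₀, m₁ = m₀ + Finsupp.single (k, j) 1 :=
    Finsupp.exists_eq_add_single_of_pos (by simpa [Finsupp.single_apply, hne.symm] using hkj)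
  refine ⟨m₀ + Finsupp.single (i, j) 1 + Finsupp.single (k, l) 1, ?_, ?_, by simp, ?_⟩
  · simp only [Finsupp.mapDomain_add, Finsupp.mapDomain_single]
    abel
  · simp only [Finsupp.mapDomain_add, Finsupp.mapDomain_single]
  · convert Ideal.mul_mem_left _ (monomial m₀ 1) (minor_mem_minorsIdeal (R := R) i k l j) using 1
    simp only [monomial_add_single, pow_one]
    ring

theorem monomial_sub_monomial_mem_minorsIdeal {m m' : ι × κ →₀ ℕ}
    (hrow : m.mapDomain Prod.fst = m'.mapDomain Prod.fst)
    (hcol : m.mapDomain Prod.snd = m'.mapDomain Prod.snd) :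
    monomial m (1 : R) - monomial m' 1 ∈ minorsIdeal R ι κ := by
  induction m using WellFoundedLT.induction generalizing m' with
  | ind m ih =>
  rcases eq_or_ne m 0 with rfl | hm
  · rw [Finsupp.mapDomain_zero, eq_comm,
      Finsupp.mapDomain_apply_eq_zero_iff_of_subsingletonAddUnits] at hrow
    simp [hrow]
  obtain ⟨⟨i, j⟩, hij⟩ := Finsupp.ne_iff.1 hm
  replace hij : 0 < m (i, j) := Nat.pos_of_ne_zero hij
  obtain ⟨m'', hrow'', hcol'', hij'', hm'⟩ := exists_exchange_mem_minorsIdeal (R := R) (i := i)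
    (j := j) (hrow ▸ Finsupp.mapDomain_pos_iff.2 ⟨_, rfl, hij⟩)
    (hcol ▸ Finsupp.mapDomain_pos_iff.2 ⟨_, rfl, hij⟩)
  obtain ⟨m₀, rfl⟩ := Finsupp.exists_eq_add_single_of_pos hij
  obtain ⟨m₀'', rfl⟩ := Finsupp.exists_eq_add_single_of_pos hij''
  have hrow₀ := hrow.trans hrow''.symm
  have hcol₀ := hcol.trans hcol''.symm
  simp only [Finsupp.mapDomain_add, add_left_inj] at hrow₀ hcol₀
  have hm₀ := ih m₀ (lt_add_of_pos_right _ (pos_iff_ne_zero.2 (by simp))) hrow₀ hcol₀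
  convert sub_mem (Ideal.mul_mem_right (X (i, j)) _ hm₀) hm' using 1
  simp only [monomial_add_single, pow_one]
  ring

theorem mem_minorsIdeal_of_rename_snd_eq_zero [DecidableEq ι] {x : MvPolynomial (ι × κ) R}
    {r : ι → ℕ} (hx : x.IsWeightedHomogeneous (fun p : ι × κ => Pi.single p.1 1) r)
    (h : rename Prod.snd x = 0) : x ∈ minorsIdeal R ι κ := by
  have hrow : ∀ m ∈ x.support, ⇑(m.mapDomain Prod.fst) = r := fun m hm =>
    (Finsupp.weight_pi_single_fst m).symm.trans (hx (mem_support_iff.1 hm))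
  -- `L` lifts `β^γ` to a monomial of `x` above it, whenever there is one.
  let L : MvPolynomial κ R →ₗ[R] MvPolynomial (ι × κ) R :=
    (basisMonomials κ R).constr R fun γ =>
      monomial (Function.invFunOn (Finsupp.mapDomain Prod.snd) x.support γ) 1
  have hL : ∀ m ∈ x.support,
      monomial m 1 - L (monomial (m.mapDomain Prod.snd) 1) ∈ minorsIdeal R ι κ := by
    intro m hm
    obtain ⟨hmem, hcol⟩ := Function.invFunOn_pos (f := Finsupp.mapDomain Prod.snd) ⟨m, hm, rfl⟩
    have hbasis : (monomial (m.mapDomain Prod.snd) 1 : MvPolynomial κ R) =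
        basisMonomials κ R (m.mapDomain Prod.snd) := by simp
    rw [hbasis, Module.Basis.constr_basis]
    exact monomial_sub_monomial_mem_minorsIdeal
      (DFunLike.coe_injective ((hrow m hm).trans (hrow _ hmem).symm)) hcol.symm
  have hsum : x - L (rename Prod.snd x) =
      ∑ m ∈ x.support, C (coeff m x) * (monomial m 1 - L (monomial (m.mapDomain Prod.snd) 1)) := by
    conv_lhs => rw [x.as_sum]
    rw [map_sum, map_sum, ← Finset.sum_sub_distrib]
    refine Finset.sum_congr rfl fun m _ => ?_
    rw [rename_monomial, mul_sub, C_mul_monomial, mul_one, ← smul_eq_C_mul, ← map_smul,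
      smul_monomial, smul_eq_mul, mul_one]
  rw [h, map_zero, sub_zero] at hsum
  rw [hsum]
  exact sum_mem fun m hm => Ideal.mul_mem_left _ _ (hL m hm)

theorem rename_snd_eq_zero_iff_mem_minorsIdeal [DecidableEq ι] {x : MvPolynomial (ι × κ) R}
    {r : ι → ℕ} (hx : x.IsWeightedHomogeneous (fun p : ι × κ => Pi.single p.1 1) r) :
    rename Prod.snd x = 0 ↔ x ∈ minorsIdeal R ι κ :=
  ⟨mem_minorsIdeal_of_rename_snd_eq_zero hx, fun h => minorsIdeal_le_ker_rename_snd h⟩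

end MvPolynomial

namespace BorderComon

lemma IR_eq_minorsIdeal (n d : ℕ) : IR n d = minorsIdeal ℂ (Fin d) (Fin n) := by
  have hgen : ∀ {i k : Fin d} {j l : Fin n}, i < k → j < l →
      (X (i, j) * X (k, l) - X (i, l) * X (k, j) : MvPolynomial (Fin d × Fin n) ℂ) ∈ IR n d :=
    fun hik hjl => Ideal.subset_span ⟨_, _, _, _, hik, hjl, rfl⟩
  refine le_antisymm (Ideal.span_le.2 ?_) (Ideal.span_le.2 ?_)
  · rintro _ ⟨i, k, j, l, -, -, rfl⟩
    exact minor_mem_minorsIdeal i k j l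
  rintro _ ⟨i, k, j, l, rfl⟩
  rw [SetLike.mem_coe]
  rcases lt_trichotomy i k with hik | rfl | hik
  · rcases lt_trichotomy j l with hjl | rfl | hjl
    · exact hgen hik hjl
    · simp
    · convert neg_mem (hgen hik hjl) using 1
      ring
  · simp [mul_comm]
  · rcases lt_trichotomy j l with hjl | rfl | hjl
    · convert neg_mem (hgen hik hjl) using 1
      ring
    · simp
    · convert hgen hik hjl using 1
      ring

lemma piL_apply (n d : ℕ) (x : MvPolynomial (Fin d × Fin n) ℂ) :
    piL n d x = rename Prod.snd x := by
  change piAlg n d x = _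
  congr 1
  exact algHom_ext fun p => by simp [piAlg]

theorem stmt_1_general (n d : ℕ) (u : Fin d → ℕ)
    (x : MvPolynomial (Fin d × Fin n) ℂ) (hx : x ∈ Scomp n d u) :
    piL n d x = 0 ↔ x ∈ IR n d := by
  rw [piL_apply, IR_eq_minorsIdeal]
  exact rename_snd_eq_zero_iff_mem_minorsIdeal ((mem_weightedHomogeneousSubmodule ℂ _ u x).1 hx)

/-- first part of Lemma 3.5: for every `u ∈ ℤ^d_{≥0}`,
`ker (π|_{S_u}) = (I_R)_u`. -/
theorem stmt_1 (n d : ℕ) (hn : 0 < n) (hd : 0 < d) (u : Fin d → ℕ)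
    (x : MvPolynomial (Fin d × Fin n) ℂ) (hx : x ∈ Scomp n d u) :
    piL n d x = 0 ↔ x ∈ IR n d :=
  stmt_1_general n d u x hx

end BorderComon
end
end

section
/- Let n, d, r be positive integers with n ≤ r ≤ C(n+1,2) (the binomial coefficient (n+1 choose 2)). Let I ⊆ V be a homogeneous ideal with dim_ℂ (V/I)_a = h_{r,Y}(a) for all a ≥ 0. Then dim_ℂ (S/Υ(I))_u = h_{r,X}(u) for all u ∈ ℤ^d_{≥0}. -/
/-!
Common setup, following the paper "On the abundance of minimal border rank symmetric
tensors verifying Comon's conjecture".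

* `S = ℂ[α_{i,j} : 1 ≤ i ≤ d, 1 ≤ j ≤ n]` is modeled as `MvPolynomial (Fin d × Fin n) ℂ`,
  with the `ℤ^d`-grading in which `deg α_{i,j} = e_i`; `Scomp n d u` is the
  multidegree-`u` component (`u : Fin d → ℕ`).
* `V = ℂ[β_1,…,β_n]` is modeled as `MvPolynomial (Fin n) ℂ` with its standard grading;
  `Vcomp n N` is the degree-`N` component.
* The graded duals `T` and `P` are modeled by the same polynomial rings, with `S`
  (resp. `V`) acting by differentiation (`apolar`); `ann F` is the apolar
  (annihilator) ideal of `F`.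
* A tensor `F ∈ (ℂ^n)^{⊗d}` is an element of the multidegree-`(1,…,1)` component
  `Scomp n d (fun _ => 1)` (a multilinear form in the `x_{i,j}`).
-/

open MvPolynomial Submodule Module

noncomputable section

namespace BorderComon

/-!
The diagonal map `π : S → V` kills `I_R`, and `π ∘ ψ_u` is the identity on `V_{|u|}`. Conversely,
swapping `α_{i,l} α_{k,j} ↦ α_{i,j} α_{k,l}` (`i < k`, `j < l`) modulo `I_R` turns every monomial of
`S_u` into a sorted one, and a sorted exponent matrix is determined by its row sums `u` and column
sums, so it is `ψ_u` of its image under `π`. Hence `π` induces `(S/Υ(I))_u ≅ (V/I)_{|u|}`. The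
Hilbert functions `min r (dim ·)` then agree: for `|u| ≤ 1` because `ψ_u : V_{|u|} ≅ S_u`, and for
`|u| ≥ 2` because `dim S_u ≥ dim V_{|u|} ≥ dim V_2 = C(n+1, 2) ≥ r`.
-/

/-- Each summand is the length of `[a, b) ∩ [g t, g (t + 1))`, i.e. an increment of the
clamp of `g` to `[a, b]`, so the sum telescopes. -/
lemma sum_range_min_sub_max {g : ℕ → ℕ} (hg : Monotone g) (h0 : g 0 = 0) {a b N : ℕ}
    (hb : b ≤ g N) :
    ∑ t ∈ Finset.range N, (min b (g (t + 1)) - max a (g t)) = b - a := by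
  set clamp : ℕ → ℕ := fun t => max a (min b (g t))
  have hclamp : Monotone clamp := fun s t hst => by
    have := hg hst
    simp only [clamp]
    omega
  have hterm : ∀ t, min b (g (t + 1)) - max a (g t) = clamp (t + 1) - clamp t := fun t => by
    have := hg (Nat.le_succ t)
    simp only [clamp]
    omega
  rw [Finset.sum_congr rfl fun t _ => hterm t, Finset.sum_range_tsub hclamp]
  simp only [clamp, h0]
  omega

lemma mapDomain_snd_apply {α β M : Type*} [Fintype α] [Fintype β] [AddCommMonoid M]
    (m : (α × β) →₀ M) (j : β) : m.mapDomain Prod.snd j = ∑ i, m (i, j) := by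
  classical
  simp [Finsupp.mapDomain, Finsupp.sum_fintype, Finsupp.single_apply, Fintype.sum_prod_type]

lemma degree_eq_of_mem_homogeneousSubmodule {σ R : Type*} [CommSemiring R] {N : ℕ}
    {v : MvPolynomial σ R} (hv : v ∈ homogeneousSubmodule σ R N) {γ : σ →₀ ℕ}
    (hγ : γ ∈ v.support) : γ.degree = N := by
  rw [Finsupp.degree_eq_weight_one]
  exact hv (mem_support_iff.mp hγ)

instance {σ R : Type*} [CommSemiring R] [Finite σ] (N : ℕ) :
    Module.Finite R (homogeneousSubmodule σ R N) :=
  Module.Finite.iff_fg.mpr (homogeneousSubmodule_fg _ _ N)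

def partialSum {k : ℕ} (v : Fin k → ℕ) (s : ℕ) : ℕ :=
  ∑ i : Fin k, if (i : ℕ) < s then v i else 0

lemma partialSum_zero {k : ℕ} (v : Fin k → ℕ) : partialSum v 0 = 0 := by
  simp [partialSum]

lemma partialSum_mono {k : ℕ} (v : Fin k → ℕ) : Monotone (partialSum v) := fun s t hst =>
  Finset.sum_le_sum fun i _ => by split_ifs <;> omega

lemma partialSum_succ {k : ℕ} (v : Fin k → ℕ) (i : Fin k) :
    partialSum v (i + 1) = partialSum v i + v i := by
  have hvi : v i = ∑ j, if j = i then v j else 0 := by simp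
  rw [partialSum, partialSum, hvi, ← Finset.sum_add_distrib]
  refine Finset.sum_congr rfl fun j _ => ?_
  have : j = i ↔ (j : ℕ) = i := Fin.ext_iff
  split_ifs <;> omega

lemma partialSum_of_le {k : ℕ} (v : Fin k → ℕ) {s : ℕ} (hs : k ≤ s) :
    partialSum v s = ∑ i, v i :=
  Finset.sum_congr rfl fun i _ => if_pos (by omega)

variable {n d : ℕ}

lemma distrib_apply (u : Fin d → ℕ) (γ : Fin n →₀ ℕ) (i : Fin d) (j : Fin n) :
    distrib n d u γ (i, j) =
      min (partialSum u (i + 1)) (partialSum γ (j + 1)) -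
        max (partialSum u i) (partialSum γ j) := by
  simp [distrib, partialSum, Finset.sum_filter]

abbrev rowWeight (n d : ℕ) : Fin d × Fin n → Fin d → ℕ := fun p => Pi.single p.1 1

lemma weight_rowWeight_apply (m : (Fin d × Fin n) →₀ ℕ) (i : Fin d) :
    Finsupp.weight (rowWeight n d) m i = ∑ j, m (i, j) := by
  rw [Finsupp.weight_eq_sum, Finset.sum_apply, Fintype.sum_prod_type, Finset.sum_eq_single i] <;>
    simp +contextual [eq_comm]

lemma weight_rowWeight_distrib (u : Fin d → ℕ) (γ : Fin n →₀ ℕ) (h : ∑ i, u i ≤ γ.degree) :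
    Finsupp.weight (rowWeight n d) (distrib n d u γ) = u := by
  funext i
  have hb : partialSum u (i + 1) ≤ partialSum γ n := by
    rw [partialSum_of_le γ le_rfl]
    exact (partialSum_mono u i.2).trans
      ((partialSum_of_le u le_rfl).trans_le (γ.degree_eq_sum ▸ h))
  rw [weight_rowWeight_apply]
  simp only [distrib_apply]
  rw [Fin.sum_univ_eq_sum_range (fun t => min (partialSum u (i + 1)) (partialSum γ (t + 1)) -
      max (partialSum u i) (partialSum γ t)),
    sum_range_min_sub_max (partialSum_mono _) (partialSum_zero _) hb, partialSum_succ]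
  omega

lemma mapDomain_snd_distrib (u : Fin d → ℕ) (γ : Fin n →₀ ℕ) (h : γ.degree ≤ ∑ i, u i) :
    (distrib n d u γ).mapDomain Prod.snd = γ := by
  ext j
  have hb : partialSum γ (j + 1) ≤ partialSum u d := by
    rw [partialSum_of_le u le_rfl]
    exact (partialSum_mono γ j.2).trans
      ((partialSum_of_le γ le_rfl).trans_le (γ.degree_eq_sum ▸ h))
  rw [mapDomain_snd_apply]
  simp only [distrib_apply, min_comm (partialSum u _), max_comm (partialSum u _)]
  rw [Fin.sum_univ_eq_sum_range (fun t => min (partialSum γ (j + 1)) (partialSum u (t + 1)) -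
      max (partialSum γ j) (partialSum u t)),
    sum_range_min_sub_max (partialSum_mono _) (partialSum_zero _) hb, partialSum_succ]
  omega

def rectSum (m : (Fin d × Fin n) →₀ ℕ) (s t : ℕ) : ℕ :=
  ∑ p : Fin d × Fin n, if (p.1 : ℕ) < s ∧ (p.2 : ℕ) < t then m p else 0

lemma rectSum_mono (m : (Fin d × Fin n) →₀ ℕ) {s t s' t' : ℕ} (hs : s ≤ s') (ht : t ≤ t') :
    rectSum m s t ≤ rectSum m s' t' :=
  Finset.sum_le_sum fun p _ => by split_ifs <;> omega

lemma rectSum_right (m : (Fin d × Fin n) →₀ ℕ) (s : ℕ) :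
    rectSum m s n = partialSum (Finsupp.weight (rowWeight n d) m) s := by
  rw [rectSum, Fintype.sum_prod_type]
  refine Finset.sum_congr rfl fun i _ => ?_
  rw [weight_rowWeight_apply]
  split_ifs with hi <;> simp [hi]

lemma rectSum_top (m : (Fin d × Fin n) →₀ ℕ) (t : ℕ) :
    rectSum m d t = partialSum (m.mapDomain Prod.snd) t := by
  rw [rectSum, Fintype.sum_prod_type_right]
  refine Finset.sum_congr rfl fun j _ => ?_
  rw [mapDomain_snd_apply]
  split_ifs with hj <;> simp [hj]

lemma rectSum_succ_succ (m : (Fin d × Fin n) →₀ ℕ) (i : Fin d) (j : Fin n) :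
    rectSum m (i + 1) (j + 1) + rectSum m i j =
      rectSum m (i + 1) j + rectSum m i (j + 1) + m (i, j) := by
  have hm : m (i, j) = ∑ p : Fin d × Fin n, if p = (i, j) then m p else 0 := by simp
  unfold rectSum
  rw [hm, ← Finset.sum_add_distrib, ← Finset.sum_add_distrib, ← Finset.sum_add_distrib]
  refine Finset.sum_congr rfl fun p _ => ?_
  have hp : p = (i, j) ↔ (p.1 : ℕ) = i ∧ (p.2 : ℕ) = j := by simp [Prod.ext_iff, Fin.ext_iff]
  simp only [hp]
  split_ifs <;> omega

def IsSorted (m : (Fin d × Fin n) →₀ ℕ) : Prop :=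
  ∀ i k : Fin d, ∀ j l : Fin n, i < k → j < l → m (i, l) = 0 ∨ m (k, j) = 0

/-- If the `s × t` corner missed mass of both the first `s` rows and the first `t` columns,
there would be an entry to its right and one below it, forming an inversion. -/
lemma rectSum_eq_min {m : (Fin d × Fin n) →₀ ℕ} (hm : IsSorted m) {s t : ℕ}
    (hs : s ≤ d) (ht : t ≤ n) :
    rectSum m s t =
      min (partialSum (Finsupp.weight (rowWeight n d) m) s)
        (partialSum (m.mapDomain Prod.snd) t) := by
  rw [← rectSum_right, ← rectSum_top]
  have h₁ := rectSum_mono m (le_refl s) ht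
  have h₂ := rectSum_mono m hs (le_refl t)
  by_contra hne
  obtain ⟨p, -, hp⟩ := Finset.exists_lt_of_sum_lt (show rectSum m s t < rectSum m s n by omega)
  obtain ⟨q, -, hq⟩ := Finset.exists_lt_of_sum_lt (show rectSum m s t < rectSum m d t by omega)
  have hp' : (p.1 : ℕ) < s ∧ t ≤ p.2 ∧ m p ≠ 0 := by
    have := p.2.isLt
    split_ifs at hp <;> omega
  have hq' : s ≤ (q.1 : ℕ) ∧ (q.2 : ℕ) < t ∧ m q ≠ 0 := by
    have := q.1.isLt
    split_ifs at hq <;> omega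
  rcases hm p.1 q.1 q.2 p.2 (by omega) (by omega) with h | h
  · exact hp'.2.2 h
  · exact hq'.2.2 h

theorem eq_distrib_of_isSorted {m : (Fin d × Fin n) →₀ ℕ} (hm : IsSorted m) :
    m = distrib n d (Finsupp.weight (rowWeight n d) m) (m.mapDomain Prod.snd) := by
  ext ⟨i, j⟩
  rw [distrib_apply]
  have h₁₁ := rectSum_eq_min hm (s := i + 1) (t := j + 1) i.2 j.2
  have h₀₀ := rectSum_eq_min hm (s := i) (t := j) i.2.le j.2.le
  have h₁₀ := rectSum_eq_min hm (s := i + 1) (t := j) i.2 j.2.le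
  have h₀₁ := rectSum_eq_min hm (s := i) (t := j + 1) i.2.le j.2
  have := rectSum_succ_succ m i j
  have := partialSum_mono (Finsupp.weight (rowWeight n d) m) (Nat.le_add_right i 1)
  have := partialSum_mono (m.mapDomain Prod.snd) (Nat.le_add_right j 1)
  omega

lemma psi_monomial (u : Fin d → ℕ) (γ : Fin n →₀ ℕ) (c : ℂ) :
    psi n d u (monomial γ c) = monomial (distrib n d u γ) c :=
  AddMonoidAlgebra.mapDomainLinearMap_single ..

lemma piL_monomial (m : (Fin d × Fin n) →₀ ℕ) (c : ℂ) :
    piL n d (monomial m c) = monomial (m.mapDomain Prod.snd) c := by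
  have : piAlg n d = rename Prod.snd := by ext; simp [piAlg]
  rw [piL, AlgHom.toLinearMap_apply, this, rename_monomial]

lemma degree_eq_sum_weight_rowWeight (m : (Fin d × Fin n) →₀ ℕ) :
    m.degree = ∑ i, Finsupp.weight (rowWeight n d) m i := by
  simp only [Finsupp.degree_eq_sum, weight_rowWeight_apply, Fintype.sum_prod_type]

lemma Scomp_le_homogeneousSubmodule (u : Fin d → ℕ) :
    Scomp n d u ≤ homogeneousSubmodule (Fin d × Fin n) ℂ (∑ i, u i) := fun x hx m hm => by
  change (Finsupp.weight fun _ => 1) m = _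
  rw [← Finsupp.degree_eq_weight_one, degree_eq_sum_weight_rowWeight, hx hm]

instance (N : ℕ) : FiniteDimensional ℂ (Vcomp n N) :=
  inferInstanceAs (FiniteDimensional ℂ (homogeneousSubmodule _ ℂ N))

instance (u : Fin d → ℕ) : FiniteDimensional ℂ (Scomp n d u) :=
  Submodule.finiteDimensional_of_le (Scomp_le_homogeneousSubmodule u)

lemma psi_mem_Scomp (u : Fin d → ℕ) {v : MvPolynomial (Fin n) ℂ} (hv : v ∈ Vcomp n (∑ i, u i)) :
    psi n d u v ∈ Scomp n d u := by
  rw [as_sum v, map_sum]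
  refine Submodule.sum_mem _ fun γ hγ => ?_
  rw [psi_monomial]
  exact isWeightedHomogeneous_monomial _ _ _
    (weight_rowWeight_distrib u γ (degree_eq_of_mem_homogeneousSubmodule hv hγ).ge)

lemma piL_mem_Vcomp (u : Fin d → ℕ) {x : MvPolynomial (Fin d × Fin n) ℂ} (hx : x ∈ Scomp n d u) :
    piL n d x ∈ Vcomp n (∑ i, u i) := by
  rw [as_sum x, map_sum]
  refine Submodule.sum_mem _ fun m hm => ?_
  rw [piL_monomial]
  refine isHomogeneous_monomial _ ?_
  rw [Finsupp.degree_mapDomain, degree_eq_sum_weight_rowWeight, hx (mem_support_iff.mp hm)]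

lemma piL_psi (u : Fin d → ℕ) {v : MvPolynomial (Fin n) ℂ} (hv : v ∈ Vcomp n (∑ i, u i)) :
    piL n d (psi n d u v) = v := by
  conv_lhs => rw [as_sum v, map_sum, map_sum]
  conv_rhs => rw [as_sum v]
  refine Finset.sum_congr rfl fun γ hγ => ?_
  rw [psi_monomial, piL_monomial,
    mapDomain_snd_distrib u γ (degree_eq_of_mem_homogeneousSubmodule hv hγ).le]

lemma piL_eq_zero_of_mem_IR {x : MvPolynomial (Fin d × Fin n) ℂ} (hx : x ∈ IR n d) :
    piL n d x = 0 := by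
  suffices IR n d ≤ RingHom.ker (piAlg n d) from this hx
  rw [IR, Ideal.span_le]
  rintro _ ⟨i, k, j, l, -, -, rfl⟩
  simp [piAlg, mul_comm]

lemma monomial_mem_map_psi_of_isSorted {m : (Fin d × Fin n) →₀ ℕ} (hs : IsSorted m)
    {u : Fin d → ℕ} (hm : Finsupp.weight (rowWeight n d) m = u) :
    monomial m (1 : ℂ) ∈ (Vcomp n (∑ i, u i)).map (psi n d u) := by
  refine ⟨monomial (m.mapDomain Prod.snd) 1, isHomogeneous_monomial _ ?_, ?_⟩
  · rw [Finsupp.degree_mapDomain, degree_eq_sum_weight_rowWeight, hm]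
  · rw [psi_monomial, ← hm, ← eq_distrib_of_isSorted hs]

abbrev swapWeight (n d : ℕ) : Fin d × Fin n → ℕ := fun p => p.1 * p.2

lemma weight_swapWeight_le (m : (Fin d × Fin n) →₀ ℕ) :
    Finsupp.weight (swapWeight n d) m ≤ d * n * m.degree := by
  rw [Finsupp.weight_eq_sum, Finsupp.degree_eq_sum, Finset.mul_sum]
  refine Finset.sum_le_sum fun p _ => ?_
  rw [smul_eq_mul, mul_comm (m p)]
  exact Nat.mul_le_mul_right _ (Nat.mul_le_mul p.1.2.le p.2.2.le)

/-- `m'` trades `α_{i,l} α_{k,j}` for `α_{i,j} α_{k,l}`, which raises `swapWeight` by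
`(k - i) (l - j)`. -/
lemma exists_swap_of_not_isSorted {m : (Fin d × Fin n) →₀ ℕ} (hm : ¬ IsSorted m) :
    ∃ m' : (Fin d × Fin n) →₀ ℕ,
      Finsupp.weight (rowWeight n d) m' = Finsupp.weight (rowWeight n d) m ∧
      Finsupp.weight (swapWeight n d) m < Finsupp.weight (swapWeight n d) m' ∧
      (monomial m' 1 - monomial m 1 : MvPolynomial (Fin d × Fin n) ℂ) ∈ IR n d := by
  simp only [IsSorted, not_forall, not_or] at hm
  obtain ⟨i, k, j, l, hik, hjl, hil, hkj⟩ := hm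
  have hne : (i, l) ≠ (k, j) := fun h => hik.ne (congrArg Prod.fst h)
  have hle : Finsupp.single (i, l) 1 + Finsupp.single (k, j) 1 ≤ m := by
    intro q
    simp only [Finsupp.coe_add, Pi.add_apply, Finsupp.single_apply]
    by_cases h₁ : (i, l) = q <;> by_cases h₂ : (k, j) = q
    · exact absurd (h₁.trans h₂.symm) hne
    · subst h₁; simp only [if_true, if_neg h₂]; omega
    · subst h₂; simp only [if_true, if_neg h₁]; omega
    · simp [h₁, h₂]
  set b := m - (Finsupp.single (i, l) 1 + Finsupp.single (k, j) 1)
  have hb : m = b + (Finsupp.single (i, l) 1 + Finsupp.single (k, j) 1) :=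
    (tsub_add_cancel_of_le hle).symm
  refine ⟨b + (Finsupp.single (i, j) 1 + Finsupp.single (k, l) 1), ?_, ?_, ?_⟩
  · rw [hb]
    simp only [map_add, Finsupp.weight_single]
  · rw [hb]
    simp only [map_add, Finsupp.weight_single, smul_eq_mul, one_mul]
    have : (i : ℕ) < k := hik
    have : (j : ℕ) < l := hjl
    nlinarith
  · have hgen : (X (i, j) * X (k, l) - X (i, l) * X (k, j) : MvPolynomial (Fin d × Fin n) ℂ) ∈
        IR n d :=
      Ideal.subset_span ⟨i, k, j, l, hik, hjl, rfl⟩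
    have hX : ∀ p, (X p : MvPolynomial (Fin d × Fin n) ℂ) = monomial (Finsupp.single p 1) 1 :=
      fun _ => rfl
    convert Ideal.mul_mem_left _ (monomial b 1) hgen using 1
    rw [hb]
    simp only [hX, monomial_mul, mul_sub, one_mul]

/-- Straightening: `swapWeight` is bounded on monomials with fixed row sums, so repeated swaps
reach a sorted monomial. -/
theorem monomial_mem_IR_sup_map_psi {u : Fin d → ℕ} (m : (Fin d × Fin n) →₀ ℕ)
    (hm : Finsupp.weight (rowWeight n d) m = u) :
    monomial m (1 : ℂ) ∈
      Submodule.restrictScalars ℂ (IR n d) ⊔ (Vcomp n (∑ i, u i)).map (psi n d u) := by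
  by_cases hs : IsSorted m
  · exact mem_sup_right (monomial_mem_map_psi_of_isSorted hs hm)
  · obtain ⟨m', hm', hlt, hIR⟩ := exists_swap_of_not_isSorted (n := n) (d := d) hs
    have hbound : Finsupp.weight (swapWeight n d) m' ≤ d * n * ∑ i, u i :=
      (weight_swapWeight_le m').trans_eq (by rw [degree_eq_sum_weight_rowWeight, hm', hm])
    rw [← sub_sub_cancel (monomial m' 1) (monomial m 1)]
    exact sub_mem (monomial_mem_IR_sup_map_psi m' (hm'.trans hm)) (mem_sup_left hIR)
termination_by d * n * (∑ i, u i) + 1 - Finsupp.weight (swapWeight n d) m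
decreasing_by omega

lemma Scomp_le_of_monomial_mem {u : Fin d → ℕ} {W : Submodule ℂ (MvPolynomial (Fin d × Fin n) ℂ)}
    (h : ∀ m, Finsupp.weight (rowWeight n d) m = u → monomial m 1 ∈ W) :
    Scomp n d u ≤ W := fun x hx => by
  rw [as_sum x]
  refine sum_mem fun m hm => ?_
  rw [← mul_one (coeff m x), ← smul_eq_mul, ← smul_monomial]
  exact W.smul_mem _ (h m (hx (mem_support_iff.mp hm)))

theorem Scomp_le_IR_sup_map_psi (u : Fin d → ℕ) :
    Scomp n d u ≤ Submodule.restrictScalars ℂ (IR n d) ⊔ (Vcomp n (∑ i, u i)).map (psi n d u) :=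
  Scomp_le_of_monomial_mem monomial_mem_IR_sup_map_psi

lemma isSorted_of_degree_le_one {m : (Fin d × Fin n) →₀ ℕ} (hm : m.degree ≤ 1) : IsSorted m := by
  intro i k j l hik _
  by_contra! h
  have hne : (i, l) ≠ (k, j) := fun e => hik.ne (congrArg Prod.fst e)
  have := Finset.sum_le_sum_of_subset (f := m) (Finset.subset_univ {(i, l), (k, j)})
  rw [Finset.sum_pair hne, ← Finsupp.degree_eq_sum] at this
  omega

theorem Scomp_le_map_psi_of_sum_le_one {u : Fin d → ℕ} (hu : ∑ i, u i ≤ 1) :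
    Scomp n d u ≤ (Vcomp n (∑ i, u i)).map (psi n d u) :=
  Scomp_le_of_monomial_mem fun m hm => monomial_mem_map_psi_of_isSorted
    (isSorted_of_degree_le_one (by rwa [degree_eq_sum_weight_rowWeight, hm])) hm

lemma choose_le_finrank_Vcomp (n N : ℕ) : (n + N - 1).choose N ≤ finrank ℂ (Vcomp n N) := by
  classical
  let e := Sym.equivNatSum (Fin n) N
  have hmem : ∀ s, monomial (e s : Fin n →₀ ℕ) (1 : ℂ) ∈ Vcomp n N := fun s =>
    isHomogeneous_monomial _ (e s).2
  have hli₀ : LinearIndependent ℂ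
      fun s => (monomial (e s : Fin n →₀ ℕ) 1 : MvPolynomial (Fin n) ℂ) := by
    have h := (basisMonomials (Fin n) ℂ).linearIndependent.comp _
      (Subtype.val_injective.comp e.injective)
    rw [coe_basisMonomials] at h
    exact h
  have hli : LinearIndependent ℂ fun s => (⟨monomial (e s : Fin n →₀ ℕ) 1, hmem s⟩ : Vcomp n N) :=
    LinearIndependent.of_comp (Vcomp n N).subtype hli₀
  simpa [Sym.card_sym_eq_choose] using hli.fintype_card_le_finrank

lemma choose_two_le_finrank_Vcomp (n : ℕ) {N : ℕ} (hN : 2 ≤ N) :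
    (n + 1).choose 2 ≤ finrank ℂ (Vcomp n N) := by
  rcases n with _ | m
  · simp
  · refine le_trans ?_ (choose_le_finrank_Vcomp _ N)
    rw [show m + 1 + N - 1 = m + N by omega, ← Nat.choose_symm_add (a := m) (b := N)]
    rw [show m + 1 + 1 = m + 2 by rfl, ← Nat.choose_symm_add (a := m) (b := 2)]
    exact Nat.choose_le_choose m (by omega)

def piComp (u : Fin d → ℕ) : Scomp n d u →ₗ[ℂ] Vcomp n (∑ i, u i) :=
  (piL n d).restrict fun _ => piL_mem_Vcomp u

def psiComp (u : Fin d → ℕ) : Vcomp n (∑ i, u i) →ₗ[ℂ] Scomp n d u :=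
  (psi n d u).restrict fun _ => psi_mem_Scomp u

lemma piComp_psiComp (u : Fin d → ℕ) : Function.LeftInverse (piComp (n := n) u) (psiComp u) :=
  fun v => Subtype.ext (piL_psi u v.2)

lemma piL_mem_of_mem_Upsilon {I : Ideal (MvPolynomial (Fin n) ℂ)}
    {x : MvPolynomial (Fin d × Fin n) ℂ} (hx : x ∈ Upsilon n d I) : piL n d x ∈ I := by
  suffices Upsilon n d I ≤ (Submodule.restrictScalars ℂ I).comap (piL n d) from this hx
  refine sup_le (fun y hy => ?_) (iSup_le fun u => Submodule.map_le_iff_le_comap.mpr ?_)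
  · simp [piL_eq_zero_of_mem_IR hy]
  · intro v hv
    simpa [piL_psi u hv.2] using hv.1

lemma psi_mem_Upsilon {I : Ideal (MvPolynomial (Fin n) ℂ)} {u : Fin d → ℕ}
    {v : MvPolynomial (Fin n) ℂ} (hvI : v ∈ I) (hv : v ∈ Vcomp n (∑ i, u i)) :
    psi n d u v ∈ Upsilon n d I :=
  mem_sup_right (mem_iSup_of_mem u ⟨v, ⟨hvI, hv⟩, rfl⟩)

/-- By straightening, `x ∈ S_u` is `a + ψ_u(π x)` with `a ∈ I_R`, so `x ∈ Υ(I)` exactly when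
`π x ∈ I`. -/
lemma ker_mkQ_comp_piComp (I : Ideal (MvPolynomial (Fin n) ℂ)) (u : Fin d → ℕ) :
    LinearMap.ker
        ((comap (Vcomp n (∑ i, u i)).subtype (Submodule.restrictScalars ℂ I)).mkQ ∘ₗ piComp u) =
      comap (Scomp n d u).subtype (Upsilon n d I) := by
  ext x
  simp only [LinearMap.mem_ker, LinearMap.comp_apply, Submodule.mkQ_apply,
    Submodule.Quotient.mk_eq_zero, Submodule.mem_comap]
  change piL n d x ∈ I ↔ (x : MvPolynomial (Fin d × Fin n) ℂ) ∈ Upsilon n d I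
  refine ⟨fun hx => ?_, piL_mem_of_mem_Upsilon⟩
  obtain ⟨a, ha, _, ⟨v, hv, rfl⟩, hav⟩ := mem_sup.mp (Scomp_le_IR_sup_map_psi u x.2)
  have hπ : piL n d x = v := by
    rw [← hav, map_add, piL_eq_zero_of_mem_IR ha, zero_add, piL_psi u hv]
  rw [← hav]
  exact add_mem (mem_sup_left ha) (psi_mem_Upsilon (hπ ▸ hx) hv)

theorem finrank_quotient_Upsilon (I : Ideal (MvPolynomial (Fin n) ℂ)) (u : Fin d → ℕ) :
    finrank ℂ (Scomp n d u ⧸ comap (Scomp n d u).subtype (Upsilon n d I)) =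
      finrank ℂ (Vcomp n (∑ i, u i) ⧸
        comap (Vcomp n (∑ i, u i)).subtype (Submodule.restrictScalars ℂ I)) :=
  ((Submodule.quotEquivOfEq _ _ (ker_mkQ_comp_piComp I u)).symm.trans
    (LinearMap.quotKerEquivOfSurjective _
      ((Submodule.mkQ_surjective _).comp (piComp_psiComp u).surjective))).finrank_eq

lemma finrank_Vcomp_le_finrank_Scomp (u : Fin d → ℕ) :
    finrank ℂ (Vcomp n (∑ i, u i)) ≤ finrank ℂ (Scomp n d u) :=
  LinearMap.finrank_le_finrank_of_injective (piComp_psiComp u).injective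

lemma finrank_Scomp_eq_of_sum_le_one {u : Fin d → ℕ} (hu : ∑ i, u i ≤ 1) :
    finrank ℂ (Scomp n d u) = finrank ℂ (Vcomp n (∑ i, u i)) := by
  have hsurj : Function.Surjective (psiComp (n := n) u) := fun x => by
    obtain ⟨v, hv, hvx⟩ := Scomp_le_map_psi_of_sum_le_one hu x.2
    exact ⟨⟨v, hv⟩, Subtype.ext hvx⟩
  exact (LinearEquiv.ofBijective _ ⟨(piComp_psiComp u).injective, hsurj⟩).finrank_eq.symm

lemma min_finrank_Vcomp_eq_min_finrank_Scomp {r : ℕ} (hr : r ≤ (n + 1).choose 2) (u : Fin d → ℕ) :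
    min r (finrank ℂ (Vcomp n (∑ i, u i))) = min r (finrank ℂ (Scomp n d u)) := by
  rcases le_or_gt (∑ i, u i) 1 with hu | hu
  · rw [finrank_Scomp_eq_of_sum_le_one hu]
  · have h₁ := hr.trans (choose_two_le_finrank_Vcomp n hu)
    have h₂ := finrank_Vcomp_le_finrank_Scomp (n := n) (d := d) u
    omega

theorem stmt_9_general (n d r : ℕ) (hr : r ≤ (n + 1).choose 2)
    (I : Ideal (MvPolynomial (Fin n) ℂ))
    (hHF : ∀ a : ℕ, finrank ℂ (Vcomp n a ⧸
      Submodule.comap (Vcomp n a).subtype (restrictScalars ℂ I)) =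
        min r (finrank ℂ (Vcomp n a))) :
    ∀ u : Fin d → ℕ, finrank ℂ (Scomp n d u ⧸
      Submodule.comap (Scomp n d u).subtype (Upsilon n d I)) =
        min r (finrank ℂ (Scomp n d u)) := by
  intro u
  rw [finrank_quotient_Upsilon, hHF, min_finrank_Vcomp_eq_min_finrank_Scomp hr]

/-- from the proof of Theorem 4.7: if `n ≤ r ≤ C(n+1,2)` and `I ⊆ V`
is a homogeneous ideal with Hilbert function `h_{r,Y}`, then `S/Υ(I)` has Hilbert
function `h_{r,X}`. -/
theorem stmt_9 (n d r : ℕ) (hn : 0 < n) (hd : 0 < d)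
    (hnr : n ≤ r) (hr : r ≤ (n + 1).choose 2)
    (I : Ideal (MvPolynomial (Fin n) ℂ)) (hhom : IsHomogV n I)
    (hHF : ∀ a : ℕ, finrank ℂ (Vcomp n a ⧸
      Submodule.comap (Vcomp n a).subtype (restrictScalars ℂ I)) =
        min r (finrank ℂ (Vcomp n a))) :
    ∀ u : Fin d → ℕ, finrank ℂ (Scomp n d u ⧸
      Submodule.comap (Scomp n d u).subtype (Upsilon n d I)) =
        min r (finrank ℂ (Scomp n d u)) :=
  stmt_9_general n d r hr I hHF

end BorderComon
end
end

section
/- Let n, d, r be positive integers with n ≤ r ≤ C(n+1,2). Let J ⊆ S be a homogeneous ideal with I_R ⊆ J and dim_ℂ (S/J)_u = h_{r,X}(u) for all u ∈ ℤ^d_{≥0}. If J is radical and B_X-saturated, then Σ(J) is a radical homogeneous ideal of V. -/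
/-!
Common setup, following the paper "On the abundance of minimal border rank symmetric
tensors verifying Comon's conjecture".

* `S = ℂ[α_{i,j} : 1 ≤ i ≤ d, 1 ≤ j ≤ n]` is modeled as `MvPolynomial (Fin d × Fin n) ℂ`,
  with the `ℤ^d`-grading in which `deg α_{i,j} = e_i`; `Scomp n d u` is the
  multidegree-`u` component (`u : Fin d → ℕ`).
* `V = ℂ[β_1,…,β_n]` is modeled as `MvPolynomial (Fin n) ℂ` with its standard grading;
  `Vcomp n N` is the degree-`N` component.
* The graded duals `T` and `P` are modeled by the same polynomial rings, with `S`
  (resp. `V`) acting by differentiation (`apolar`); `ann F` is the apolar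
  (annihilator) ideal of `F`.
* A tensor `F ∈ (ℂ^n)^{⊗d}` is an element of the multidegree-`(1,…,1)` component
  `Scomp n d (fun _ => 1)` (a multilinear form in the `x_{i,j}`).
-/

open MvPolynomial Submodule Module

noncomputable section

namespace BorderComon

/-!
A form `f ∈ S_{v+e_k}` can be written `f = ∑_j α_{k,j} m_j`, and then `g = ∑_j α_{i,j} m_j`
lies in `S_{v+e_i}`, has `π g = π f`, and satisfies `g α_{k,c} ≡ α_{i,c} f` modulo `I_R`. So if
`f ∈ J`, then `g (α_{k,1}, …, α_{k,n}) ⊆ J`; this ideal contains `g B_X`, so saturation gives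
`g ∈ J`: the image `π(J_u)` depends only on `|u|`. On `S_{N e_r}` the map `π` is inverted by
`β_j ↦ α_{r,j}`, hence `Σ(J)` is the homogeneous core of the preimage of `J` under this
substitution. That preimage is radical, and the homogeneous core of a radical ideal is radical.
-/

theorem _root_.Ideal.IsRadical.homogeneousCore {ι σ A : Type*} [CommRing A] [AddCommMonoid ι]
    [LinearOrder ι] [IsOrderedCancelAddMonoid ι] [SetLike σ A] [AddSubmonoidClass σ A]
    {𝒜 : ι → σ} [GradedRing 𝒜] {I : Ideal A} (hI : I.IsRadical) :
    (I.homogeneousCore 𝒜).toIdeal.IsRadical := by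
  have hle : (I.homogeneousCore 𝒜).toIdeal.radical ≤ I :=
    (Ideal.radical_mono (I.toIdeal_homogeneousCore_le 𝒜)).trans hI
  calc (I.homogeneousCore 𝒜).toIdeal.radical
      = ((I.homogeneousCore 𝒜).toIdeal.radical.homogeneousCore 𝒜).toIdeal :=
        (I.homogeneousCore 𝒜).isHomogeneous.radical.toIdeal_homogeneousCore_eq_self.symm
    _ ≤ (I.homogeneousCore 𝒜).toIdeal := Ideal.homogeneousCore_mono 𝒜 hle

attribute [local instance] MvPolynomial.gradedAlgebra

section

variable {n d : ℕ}

open Finsupp in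
lemma weight_row_apply (b : Fin d × Fin n →₀ ℕ) (i : Fin d) :
    weight (fun p : Fin d × Fin n => (Pi.single p.1 1 : Fin d → ℕ)) b i = ∑ j, b (i, j) := by
  classical
  rw [weight_eq_sum, Finset.sum_apply, Fintype.sum_prod_type, Finset.sum_eq_single i]
  · simp
  · intro k _ hk; simp [Ne.symm hk]
  · simp

lemma isHomogeneous_of_mem_Scomp {u : Fin d → ℕ} {f : MvPolynomial (Fin d × Fin n) ℂ}
    (hf : f ∈ Scomp n d u) : f.IsHomogeneous (∑ i, u i) := by
  intro b hb
  rw [Finsupp.weight_eq_sum, ← hf hb]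
  simp [weight_row_apply, Fintype.sum_prod_type]

lemma piAlg_eq_rename : piAlg n d = rename Prod.snd := by
  ext; simp [piAlg]

lemma piAlg_mem_Vcomp {u : Fin d → ℕ} {f : MvPolynomial (Fin d × Fin n) ℂ}
    (hf : f ∈ Scomp n d u) : piAlg n d f ∈ Vcomp n (∑ i, u i) := by
  rw [piAlg_eq_rename]
  exact (isHomogeneous_of_mem_Scomp hf).rename_isHomogeneous

lemma piAlg_rename_prodMk (r : Fin d) (x : MvPolynomial (Fin n) ℂ) :
    piAlg n d (rename (Prod.mk r) x) = x := by
  rw [piAlg_eq_rename, rename_rename]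
  exact rename_id_apply x

lemma rename_prodMk_mem_Scomp (r : Fin d) {M : ℕ} {x : MvPolynomial (Fin n) ℂ}
    (hx : x ∈ Vcomp n M) : rename (Prod.mk r) x ∈ Scomp n d (Pi.single r M) := by
  classical
  intro b hb
  obtain ⟨γ, rfl, hγ⟩ := coeff_rename_ne_zero _ _ _ hb
  funext i
  rw [weight_row_apply]
  by_cases hi : i = r
  · subst hi
    simp only [Finsupp.mapDomain_apply (Prod.mk_right_injective i), Pi.single_eq_same]
    rw [← hx hγ, Finsupp.weight_eq_sum]
    simp
  · simp [Finsupp.mapDomain_of_notMem_range, hi, Ne.symm hi]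

lemma rename_prodMk_piAlg {r : Fin d} {M : ℕ} {f : MvPolynomial (Fin d × Fin n) ℂ}
    (hf : f ∈ Scomp n d (Pi.single r M)) : rename (Prod.mk r) (piAlg n d f) = f := by
  obtain ⟨x, rfl⟩ : ∃ x, rename (Prod.mk r) x = f := by
    refine exists_rename_eq_of_vars_subset_range f _ (Prod.mk_right_injective r) ?_
    rintro ⟨i, j⟩ hij
    obtain ⟨b, hb, hij⟩ := (mem_vars_iff_mem_support _).1 hij
    have hrow := congrFun (hf (mem_support_iff.1 hb)) i
    rw [weight_row_apply] at hrow
    have : i = r := by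
      by_contra hir
      rw [Pi.single_eq_of_ne hir, Finset.sum_eq_zero_iff] at hrow
      exact (Finsupp.mem_support_iff.1 hij) (hrow j (Finset.mem_univ _))
    exact ⟨j, by rw [this]⟩
  rw [piAlg_rename_prodMk]

lemma minor_mem_IR (i k : Fin d) (j l : Fin n) :
    (X (i, j) * X (k, l) - X (i, l) * X (k, j) : MvPolynomial (Fin d × Fin n) ℂ) ∈ IR n d := by
  have h_lt : ∀ i k : Fin d, i < k → ∀ j l : Fin n,
      (X (i, j) * X (k, l) - X (i, l) * X (k, j) : MvPolynomial (Fin d × Fin n) ℂ) ∈ IR n d := by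
    intro i k hik j l
    rcases lt_trichotomy j l with hjl | rfl | hlj
    · exact Ideal.subset_span ⟨i, k, j, l, hik, hjl, rfl⟩
    · simp
    · rw [← neg_sub]
      exact neg_mem (Ideal.subset_span ⟨i, k, l, j, hik, hlj, rfl⟩)
  rcases lt_trichotomy i k with hik | rfl | hki
  · exact h_lt i k hik j l
  · simp [mul_comm]
  · convert h_lt k i hki l j using 1
    ring

lemma exists_eq_sum_X_mul_of_mem_Scomp {v : Fin d → ℕ} {k : Fin d}
    {f : MvPolynomial (Fin d × Fin n) ℂ} (hf : f ∈ Scomp n d (v + Pi.single k 1)) :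
    ∃ m : Fin n → MvPolynomial (Fin d × Fin n) ℂ,
      (∀ j, m j ∈ Scomp n d v) ∧ f = ∑ j, X (k, j) * m j := by
  classical
  rw [← support_sum_monomial_coeff f]
  refine Finset.sum_induction _
    (fun f => ∃ m : Fin n → MvPolynomial (Fin d × Fin n) ℂ,
      (∀ j, m j ∈ Scomp n d v) ∧ f = ∑ j, X (k, j) * m j) ?_ ⟨0, fun _ => zero_mem _, by simp⟩ ?_
  · rintro _ _ ⟨m, hm, rfl⟩ ⟨m', hm', rfl⟩
    exact ⟨m + m', fun j => add_mem (hm j) (hm' j), by simp [mul_add, Finset.sum_add_distrib]⟩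
  intro b hb
  have hwb := hf (mem_support_iff.1 hb)
  obtain ⟨j, -, hj⟩ : ∃ j ∈ Finset.univ, b (k, j) ≠ 0 := by
    refine Finset.exists_ne_zero_of_sum_ne_zero ?_
    rw [← weight_row_apply, hwb]
    simp
  set e : Fin d × Fin n →₀ ℕ := Finsupp.single (k, j) 1
  have hbe : b - e + e = b :=
    tsub_add_cancel_of_le (Finsupp.single_le_iff.2 (Nat.one_le_iff_ne_zero.2 hj))
  have hw :
      Finsupp.weight (fun p : Fin d × Fin n => (Pi.single p.1 1 : Fin d → ℕ)) (b - e) = v := by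
    apply add_right_cancel (b := Pi.single k 1)
    rw [← hwb]
    conv_rhs => rw [← hbe]
    simp [e, Finsupp.weight_single]
  refine ⟨Pi.single j (monomial (b - e) (coeff b f)), fun j' => ?_, ?_⟩
  · rcases eq_or_ne j' j with rfl | hj'
    · rw [Pi.single_eq_same]
      exact isWeightedHomogeneous_monomial _ _ _ hw
    · simp [hj', zero_mem]
  · rw [Finset.sum_eq_single j (fun j' _ hj' => by simp [hj']) (by simp), Pi.single_eq_same,
      X, monomial_mul, one_mul, add_comm, hbe]

lemma exists_shift_row {v : Fin d → ℕ} {k : Fin d} (i : Fin d)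
    {f : MvPolynomial (Fin d × Fin n) ℂ} (hf : f ∈ Scomp n d (v + Pi.single k 1)) :
    ∃ g ∈ Scomp n d (v + Pi.single i 1), piAlg n d g = piAlg n d f ∧
      ∀ c, g * X (k, c) - X (i, c) * f ∈ IR n d := by
  obtain ⟨m, hm, rfl⟩ := exists_eq_sum_X_mul_of_mem_Scomp hf
  refine ⟨∑ j, X (i, j) * m j, sum_mem fun j _ => ?_, by simp [piAlg], fun c => ?_⟩
  · rw [add_comm]
    exact (isWeightedHomogeneous_X ℂ _ (i, j)).mul (hm j)
  · have : (∑ j, X (i, j) * m j) * X (k, c) - X (i, c) * ∑ j, X (k, j) * m j =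
        ∑ j, m j * (X (i, j) * X (k, c) - X (i, c) * X (k, j)) := by
      rw [Finset.sum_mul, Finset.mul_sum, ← Finset.sum_sub_distrib]
      exact Finset.sum_congr rfl fun j _ => by ring
    rw [this]
    exact Ideal.sum_mem _ fun j _ => Ideal.mul_mem_left _ _ (minor_mem_IR i k j c)

lemma BX_le_span_row (k : Fin d) : BX n d ≤ Ideal.span (Set.range fun j : Fin n => X (k, j)) :=
  Ideal.prod_le_inf.trans (Finset.inf_le (Finset.mem_univ k))

lemma exists_mem_shift_row {J : Ideal (MvPolynomial (Fin d × Fin n) ℂ)} (hIR : IR n d ≤ J)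
    (hsat : ∀ f : MvPolynomial (Fin d × Fin n) ℂ, (∀ b ∈ BX n d, f * b ∈ J) → f ∈ J)
    {v : Fin d → ℕ} {k : Fin d} (i : Fin d) {f : MvPolynomial (Fin d × Fin n) ℂ}
    (hfJ : f ∈ J) (hf : f ∈ Scomp n d (v + Pi.single k 1)) :
    ∃ g ∈ J, g ∈ Scomp n d (v + Pi.single i 1) ∧ piAlg n d g = piAlg n d f := by
  obtain ⟨g, hg, hπ, hgIR⟩ := exists_shift_row i hf
  have hrow : Ideal.span (Set.range fun j : Fin n => X (k, j)) ≤ J.colon {g} := by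
    refine Ideal.span_le.2 ?_
    rintro _ ⟨c, rfl⟩
    rw [SetLike.mem_coe, Submodule.mem_colon_singleton, smul_eq_mul, mul_comm]
    simpa using J.add_mem (hIR (hgIR c)) (J.mul_mem_left (X (i, c)) hfJ)
  refine ⟨g, hsat g fun b hb => ?_, hg, hπ⟩
  rw [mul_comm, ← smul_eq_mul, ← Submodule.mem_colon_singleton]
  exact hrow (BX_le_span_row k hb)

lemma exists_mem_Scomp_of_sum_eq {J : Ideal (MvPolynomial (Fin d × Fin n) ℂ)}
    (hIR : IR n d ≤ J)
    (hsat : ∀ f : MvPolynomial (Fin d × Fin n) ℂ, (∀ b ∈ BX n d, f * b ∈ J) → f ∈ J)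
    {w u : Fin d → ℕ} (hwu : ∑ i, w i = ∑ i, u i) {f : MvPolynomial (Fin d × Fin n) ℂ}
    (hfJ : f ∈ J) (hf : f ∈ Scomp n d w) :
    ∃ g ∈ J, g ∈ Scomp n d u ∧ piAlg n d g = piAlg n d f := by
  classical
  induction hN : ∑ i, (w i - u i) using Nat.strong_induction_on generalizing w f with
  | _ N ih =>
  by_cases hw : w = u
  · exact ⟨f, hfJ, hw ▸ hf, rfl⟩
  obtain ⟨k, hk⟩ : ∃ k, u k < w k := by
    by_contra! h
    exact hw (funext fun t =>
      (Finset.sum_eq_sum_iff_of_le fun t _ => h t).1 hwu t (Finset.mem_univ t))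
  obtain ⟨i, hi⟩ : ∃ i, w i < u i := by
    by_contra! h
    exact hw (funext fun t =>
      ((Finset.sum_eq_sum_iff_of_le fun t _ => h t).1 hwu.symm t (Finset.mem_univ t)).symm)
  set v := w - Pi.single k 1
  have hvw : v + Pi.single k 1 = w := tsub_add_cancel_of_le fun t => by
    rcases eq_or_ne t k with rfl | htk <;> simp [*]; omega
  have hsum : ∀ t : Fin d, ∑ x, (v + Pi.single t 1 : Fin d → ℕ) x = ∑ x, v x + 1 :=
    fun t => by simp [Finset.sum_add_distrib]
  obtain ⟨g, hgJ, hg, hπ⟩ := exists_mem_shift_row hIR hsat i hfJ (hvw ▸ hf)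
  have hlt : ∑ t, ((v + Pi.single i 1 : Fin d → ℕ) t - u t) < N := by
    rw [← hN]
    refine Finset.sum_lt_sum (fun t _ => ?_) ⟨k, Finset.mem_univ k, ?_⟩ <;>
      simp only [v, Pi.add_apply, Pi.sub_apply, Pi.single_apply] <;>
      split_ifs <;> subst_vars <;> omega
  obtain ⟨g', hg'J, hg', hπ'⟩ :=
    ih _ hlt (by rw [hsum, ← hsum k, hvw, hwu]) hgJ hg rfl
  exact ⟨g', hg'J, hg', hπ'.trans hπ⟩

lemma sum_add_ite_lt (a : ℕ) {m : ℕ} (hm : m ≤ d) :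
    ∑ i : Fin d, (a + if (i : ℕ) < m then 1 else 0) = d * a + m := by
  simp [Finset.sum_add_distrib, Finset.sum_boole, Fin.card_filter_val_lt, hm]

lemma map_inf_Scomp_le_sigmaMap (J : Ideal (MvPolynomial (Fin d × Fin n) ℂ)) (a : ℕ)
    (m : Fin d) :
    (Submodule.restrictScalars ℂ J ⊓
      Scomp n d (fun i => a + if (i : ℕ) < (m : ℕ) then 1 else 0)).map (piL n d) ≤
      SigmaMap n d J := by
  rw [SigmaMap]
  exact le_iSup₂_of_le a m le_rfl

lemma sigmaMap_eq_iSup_inf_Vcomp (J : Ideal (MvPolynomial (Fin d × Fin n) ℂ)) :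
    SigmaMap n d J = ⨆ N : ℕ, SigmaMap n d J ⊓ Vcomp n N := by
  refine le_antisymm ?_ (iSup_le fun N => inf_le_left)
  conv_lhs => rw [SigmaMap]
  refine iSup₂_le fun a m => le_iSup_of_le (∑ i : Fin d, (a + if (i : ℕ) < (m : ℕ) then 1 else 0))
    (le_inf (map_inf_Scomp_le_sigmaMap J a m) ?_)
  exact Submodule.map_le_iff_le_comap.2 fun f hf => piAlg_mem_Vcomp hf.2

lemma rename_piAlg_mem {J : Ideal (MvPolynomial (Fin d × Fin n) ℂ)} (hIR : IR n d ≤ J)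
    (hsat : ∀ f : MvPolynomial (Fin d × Fin n) ℂ, (∀ b ∈ BX n d, f * b ∈ J) → f ∈ J)
    (r : Fin d) {u : Fin d → ℕ} {f : MvPolynomial (Fin d × Fin n) ℂ}
    (hfJ : f ∈ J) (hf : f ∈ Scomp n d u) : rename (Prod.mk r) (piAlg n d f) ∈ J := by
  obtain ⟨g, hgJ, hg, hπ⟩ :=
    exists_mem_Scomp_of_sum_eq hIR hsat (u := Pi.single r (∑ i, u i)) (by simp) hfJ hf
  rwa [← hπ, rename_prodMk_piAlg hg]

lemma mem_sigmaMap_of_rename_mem {J : Ideal (MvPolynomial (Fin d × Fin n) ℂ)}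
    (hIR : IR n d ≤ J)
    (hsat : ∀ f : MvPolynomial (Fin d × Fin n) ℂ, (∀ b ∈ BX n d, f * b ∈ J) → f ∈ J)
    (r : Fin d) {M : ℕ} {x : MvPolynomial (Fin n) ℂ} (hx : x ∈ Vcomp n M)
    (hxJ : rename (Prod.mk r) x ∈ J) : x ∈ SigmaMap n d J := by
  have hmod := Nat.mod_lt M r.pos
  obtain ⟨g, hgJ, hg, hπ⟩ := exists_mem_Scomp_of_sum_eq hIR hsat
    (u := fun i : Fin d => M / d + if (i : ℕ) < M % d then 1 else 0)
    (by rw [sum_add_ite_lt _ hmod.le, Nat.div_add_mod]; simp) hxJ (rename_prodMk_mem_Scomp r hx)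
  refine map_inf_Scomp_le_sigmaMap J (M / d) ⟨M % d, hmod⟩ ⟨g, ⟨hgJ, hg⟩, ?_⟩
  rw [piL, AlgHom.toLinearMap_apply, hπ, piAlg_rename_prodMk]

theorem sigmaMap_eq_homogeneousCore {J : Ideal (MvPolynomial (Fin d × Fin n) ℂ)}
    (hIR : IR n d ≤ J)
    (hsat : ∀ f : MvPolynomial (Fin d × Fin n) ℂ, (∀ b ∈ BX n d, f * b ∈ J) → f ∈ J)
    (r : Fin d) :
    SigmaMap n d J = ((J.comap (rename (Prod.mk r))).homogeneousCore
      (homogeneousSubmodule (Fin n) ℂ)).toIdeal.restrictScalars ℂ := by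
  refine le_antisymm ?_ fun x hx => ?_
  · rw [SigmaMap]
    refine iSup₂_le fun a m => Submodule.map_le_iff_le_comap.2 fun f hf => ?_
    exact Ideal.mem_homogeneousCore_of_homogeneous_of_mem ⟨_, piAlg_mem_Vcomp hf.2⟩
      (rename_piAlg_mem hIR hsat r hf.1 hf.2)
  · rw [← sum_homogeneousComponent x]
    refine sum_mem fun M _ => mem_sigmaMap_of_rename_mem hIR hsat r
      (homogeneousComponent_isHomogeneous M x) ?_
    have hM := (Ideal.homogeneousCore _ (J.comap (rename (Prod.mk r)))).isHomogeneous M hx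
    rw [show (DirectSum.decompose (homogeneousSubmodule (Fin n) ℂ) x M : MvPolynomial (Fin n) ℂ)
      = homogeneousComponent M x from decomposition.decompose'_apply x M] at hM
    exact Ideal.mem_comap.1 (Ideal.toIdeal_homogeneousCore_le _ _ hM)

end

theorem stmt_10_general (n d : ℕ) (hd : 0 < d)
    (J : Ideal (MvPolynomial (Fin d × Fin n) ℂ))
    (hIR : IR n d ≤ J)
    (hrad : J.IsRadical)
    (hsat : ∀ f : MvPolynomial (Fin d × Fin n) ℂ,
      (∀ b ∈ BX n d, f * b ∈ J) → f ∈ J) :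
    (∀ v x : MvPolynomial (Fin n) ℂ,
        x ∈ SigmaMap n d J → v * x ∈ SigmaMap n d J) ∧
      (SigmaMap n d J = ⨆ N : ℕ, SigmaMap n d J ⊓ Vcomp n N) ∧
      (∀ (f : MvPolynomial (Fin n) ℂ) (k : ℕ), k ≠ 0 →
        f ^ k ∈ SigmaMap n d J → f ∈ SigmaMap n d J) := by
  have hcore := sigmaMap_eq_homogeneousCore hIR hsat ⟨0, hd⟩
  refine ⟨fun v x hx => ?_, sigmaMap_eq_iSup_inf_Vcomp J, fun f k _ hf => ?_⟩
  · rw [hcore] at hx ⊢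
    exact Ideal.mul_mem_left _ v hx
  · rw [hcore] at hf ⊢
    exact (hrad.comap _).homogeneousCore ⟨k, hf⟩

/-- Proposition 4.10: if `J ⊆ S` is a homogeneous ideal containing
`I_R` with Hilbert function `h_{r,X}` which is radical and `B_X`-saturated, then
`Σ(J)` is a radical homogeneous ideal of `V`. -/
theorem stmt_10 (n d r : ℕ) (hn : 0 < n) (hd : 0 < d)
    (hnr : n ≤ r) (hr : r ≤ (n + 1).choose 2)
    (J : Ideal (MvPolynomial (Fin d × Fin n) ℂ)) (hhom : IsHomogS n d J)
    (hIR : IR n d ≤ J)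
    (hHF : ∀ u : Fin d → ℕ, finrank ℂ (Scomp n d u ⧸
      Submodule.comap (Scomp n d u).subtype (restrictScalars ℂ J)) =
        min r (finrank ℂ (Scomp n d u)))
    (hrad : J.IsRadical)
    (hsat : ∀ f : MvPolynomial (Fin d × Fin n) ℂ,
      (∀ b ∈ BX n d, f * b ∈ J) → f ∈ J) :
    (∀ v x : MvPolynomial (Fin n) ℂ,
        x ∈ SigmaMap n d J → v * x ∈ SigmaMap n d J) ∧
      (SigmaMap n d J = ⨆ N : ℕ, SigmaMap n d J ⊓ Vcomp n N) ∧
      (∀ (f : MvPolynomial (Fin n) ℂ) (k : ℕ), k ≠ 0 →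
        f ^ k ∈ SigmaMap n d J → f ∈ SigmaMap n d J) :=
  stmt_10_general n d hd J hIR hrad hsat

end BorderComon
end
end
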